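/- arXiv:1610.00875 — 3 statements merged into one kernel-verified Lean document; each statement's English description precedes it below -/
import Mathlib

section
/- Let $\overline{X}, \overline{S} \in \mathbb{S}^n_+$ with $\langle \overline{X}, \overline{S}\rangle = 0$. Then the normal cone $\mathcal{N}_{\mathbb{S}^n_+}(\overline{S})$ is a polyhedral set if and only if $\mathrm{rank}(\overline{S}) \ge n - 1$. -/
open Matrix

/-- A set of matrices is polyhedral if it is the intersection of finitely many closed
half-spaces (with respect to the trace inner product). -/
def IsPolyhedralSet {n : ℕ} (C : Set (Matrix (Fin n) (Fin n) ℝ)) : Prop :=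
  ∃ (k : ℕ) (a : Fin k → Matrix (Fin n) (Fin n) ℝ) (b : Fin k → ℝ),
    C = {H | ∀ i, Matrix.trace ((a i)ᵀ * H) ≤ b i}

/-- The normal cone (in the ambient space `𝕊ⁿ` of symmetric matrices) of a set `D` of
symmetric matrices at a point `x`. -/
def matNormalCone {n : ℕ} (D : Set (Matrix (Fin n) (Fin n) ℝ))
    (x : Matrix (Fin n) (Fin n) ℝ) : Set (Matrix (Fin n) (Fin n) ℝ) :=
  {H | H.IsSymm ∧ ∀ z ∈ D, Matrix.trace (Hᵀ * (z - x)) ≤ 0}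

/-!
For `S ⪰ 0` the normal cone is `N = {H | -H ⪰ 0, tr (H S) = 0}`, i.e. minus the positive
semidefinite matrices whose columns lie in `ker S`. If `rank S ≥ n - 1`, then `ker S ⊆ ℝ v` and
`N` is the single ray `ℝ≥0 • (-v vᵀ)`, which is polyhedral.

If `rank S ≤ n - 2`, pick orthogonal nonzero `u, w ∈ ker S`. Since `N` is a cone, a finite
description of it may be taken homogeneous: `N = {H | ∀ i, ⟪aᵢ, H⟫ ≤ 0}`. For `z = u + t w` and
`y ⊥ z` in `span {u, w}`, the matrix `-z zᵀ` lies in `N` while `-z zᵀ + ε y yᵀ` does not, so some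
constraint vanishes at `-z zᵀ` and is positive at `y yᵀ`. By pigeonhole one constraint does so for
infinitely many `t`; as `t ↦ ⟪aᵢ, z zᵀ⟫` is a quadratic polynomial, it vanishes identically, hence
`x ↦ ⟪aᵢ, x xᵀ⟫` vanishes on `span {u, w}`, contradicting positivity at `y yᵀ`.
-/

open Module Filter Topology

lemma eq_zero_of_infinite_setOf_quadratic_eq_zero {a b c : ℝ}
    (h : {t : ℝ | a + b * t + c * t ^ 2 = 0}.Infinite) : a = 0 ∧ b = 0 ∧ c = 0 := by
  open Polynomial in
  have hp : (C a + C b * X + C c * X ^ 2 : ℝ[X]) = 0 :=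
    eq_zero_of_infinite_isRoot _ (by simpa using h)
  refine ⟨?_, ?_, ?_⟩
  · simpa using congrArg (coeff · 0) hp
  · simpa using congrArg (coeff · 1) hp
  · simpa using congrArg (coeff · 2) hp

lemma exists_eq_zero_and_pos_of_forall_exists_pos {ι : Type*} [Finite ι] {g h : ι → ℝ}
    (hg : ∀ i, g i ≤ 0) (hgh : ∀ ε > 0, ∃ i, 0 < g i + ε * h i) : ∃ i, g i = 0 ∧ 0 < h i := by
  by_contra! hne
  have hsmall : ∀ i, ∀ᶠ ε in 𝓝[>] (0 : ℝ), g i + ε * h i ≤ 0 := by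
    intro i
    rcases (hg i).lt_or_eq with hlt | heq
    · have hlim : Tendsto (fun ε => g i + ε * h i) (𝓝[>] 0) (𝓝 (g i)) :=
        tendsto_nhdsWithin_of_tendsto_nhds <|
          (continuous_const.add (continuous_id.mul continuous_const)).tendsto' 0 _ (by simp)
      exact (hlim.eventually_lt_const hlt).mono fun _ => le_of_lt
    · filter_upwards [self_mem_nhdsWithin] with ε (hε : 0 < ε)
      rw [heq, zero_add]
      exact mul_nonpos_of_nonneg_of_nonpos hε.le (hne i heq)
  obtain ⟨ε, hε, hεpos⟩ :=
    ((eventually_all.mpr hsmall).and self_mem_nhdsWithin).exists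
  obtain ⟨i, hi⟩ := hgh ε hεpos
  exact (hε i).not_gt hi

lemma Submodule.exists_dotProduct_eq_zero_of_one_lt_finrank {ι : Type*} [Fintype ι]
    {K : Submodule ℝ (ι → ℝ)} (hK : 1 < finrank ℝ K) :
    ∃ u ∈ K, ∃ w ∈ K, u ≠ 0 ∧ w ≠ 0 ∧ u ⬝ᵥ w = 0 := by
  have : Nontrivial K := Module.nontrivial_of_finrank_pos (by omega : 0 < finrank ℝ K)
  obtain ⟨⟨u, hu⟩, hu0⟩ := exists_ne (0 : K)
  obtain ⟨⟨w, hw⟩, hlin⟩ := exists_linearIndependent_pair_of_one_lt_finrank hK hu0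
  have hu' : u ≠ 0 := by simpa using hu0
  have huu : u ⬝ᵥ u ≠ 0 := fun h => hu' (dotProduct_self_eq_zero.mp h)
  refine ⟨u, hu, (u ⬝ᵥ u) • w - (u ⬝ᵥ w) • u, K.sub_mem (K.smul_mem _ hw) (K.smul_mem _ hu),
    hu', fun h => huu ?_, ?_⟩
  · have h' : (-(u ⬝ᵥ w)) • (⟨u, hu⟩ : K) + (u ⬝ᵥ u) • ⟨w, hw⟩ = 0 := by
      ext1; simpa [neg_smul, add_comm, sub_eq_add_neg] using h
    exact (LinearIndependent.pair_iff.mp hlin _ _ h').2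
  · simp only [dotProduct_sub, dotProduct_smul, smul_eq_mul]
    ring

lemma dotProduct_mulVec_smul_add_smul {ι : Type*} [Fintype ι] (A : Matrix ι ι ℝ)
    (u w : ι → ℝ) (α β : ℝ) :
    (α • u + β • w) ⬝ᵥ A *ᵥ (α • u + β • w) =
      α ^ 2 * (u ⬝ᵥ A *ᵥ u) + α * β * (u ⬝ᵥ A *ᵥ w + w ⬝ᵥ A *ᵥ u) + β ^ 2 * (w ⬝ᵥ A *ᵥ w) := by
  simp only [mulVec_add, mulVec_smul, dotProduct_add, add_dotProduct, dotProduct_smul,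
    smul_dotProduct, smul_eq_mul]
  ring

lemma dotProduct_mulVec_smul_add_smul_eq_zero {ι : Type*} [Fintype ι] {A : Matrix ι ι ℝ}
    {u w : ι → ℝ} (h : {t : ℝ | (u + t • w) ⬝ᵥ A *ᵥ (u + t • w) = 0}.Infinite) (α β : ℝ) :
    (α • u + β • w) ⬝ᵥ A *ᵥ (α • u + β • w) = 0 := by
  obtain ⟨h₀, h₁, h₂⟩ := eq_zero_of_infinite_setOf_quadratic_eq_zero (a := u ⬝ᵥ A *ᵥ u)
      (b := u ⬝ᵥ A *ᵥ w + w ⬝ᵥ A *ᵥ u) (c := w ⬝ᵥ A *ᵥ w) <| h.mono fun t ht => by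
    simp only [Set.mem_ofPred_eq] at ht ⊢
    have e := dotProduct_mulVec_smul_add_smul A u w 1 t
    rw [one_smul] at e
    linear_combination ht - e
  rw [dotProduct_mulVec_smul_add_smul, h₀, h₁, h₂]
  ring

section PosSemidef

variable {ι : Type*} [Fintype ι]

lemma Matrix.trace_mul_vecMulVec_self (A : Matrix ι ι ℝ) (x : ι → ℝ) :
    trace (A * vecMulVec x x) = x ⬝ᵥ A *ᵥ x := by
  rw [mul_vecMulVec, trace_vecMulVec, dotProduct_comm]

lemma Matrix.PosSemidef.trace_mul_nonneg {A B : Matrix ι ι ℝ} (hA : A.PosSemidef)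
    (hB : B.PosSemidef) : 0 ≤ trace (A * B) := by
  obtain ⟨m, v, rfl⟩ := posSemidef_iff_eq_sum_vecMulVec.mp hB
  simp only [star_trivial, Matrix.mul_sum, trace_sum, trace_mul_vecMulVec_self]
  exact Finset.sum_nonneg fun i _ => by simpa using hA.dotProduct_mulVec_nonneg (v i)

/-- Writing `A = ∑ vᵢ vᵢᵀ`, the condition `tr (A S) = 0` forces every `vᵢ` into `ker S`. -/
lemma Matrix.PosSemidef.exists_eq_smul_vecMulVec {A S : Matrix ι ι ℝ} {v : ι → ℝ}
    (hA : A.PosSemidef) (hS : S.PosSemidef) (hAS : trace (A * S) = 0)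
    (hker : ∀ x, S *ᵥ x = 0 → ∃ c : ℝ, c • v = x) :
    ∃ t : ℝ, 0 ≤ t ∧ A = t • vecMulVec v v := by
  obtain ⟨m, w, rfl⟩ := posSemidef_iff_eq_sum_vecMulVec.mp hA
  simp only [star_trivial] at hAS ⊢
  rw [trace_mul_comm, Matrix.mul_sum, trace_sum] at hAS
  simp only [trace_mul_vecMulVec_self] at hAS
  have hSw : ∀ i, S *ᵥ w i = 0 := fun i => by
    rw [← hS.dotProduct_mulVec_zero_iff, star_trivial]
    exact (Finset.sum_eq_zero_iff_of_nonneg fun j _ => by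
      simpa using hS.dotProduct_mulVec_nonneg (w j)).mp hAS i (Finset.mem_univ i)
  choose c hc using fun i => hker _ (hSw i)
  refine ⟨∑ i, c i ^ 2, Finset.sum_nonneg fun i _ => sq_nonneg _, ?_⟩
  simp only [← hc, Finset.sum_smul]
  refine Finset.sum_congr rfl fun i _ => ?_
  ext a b
  simp only [vecMulVec_apply, Pi.smul_apply, Matrix.smul_apply, smul_eq_mul]
  ring

lemma Matrix.not_posSemidef_vecMulVec_sub_smul {z y : ι → ℝ} (hzy : z ⬝ᵥ y = 0) (hy : y ≠ 0)
    {ε : ℝ} (hε : 0 < ε) : ¬ (vecMulVec z z - ε • vecMulVec y y).PosSemidef := by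
  intro h
  have hy' : 0 < y ⬝ᵥ y := by simpa using dotProduct_star_self_pos_iff.mpr hy
  have := h.dotProduct_mulVec_nonneg y
  simp [sub_mulVec, smul_mulVec, vecMulVec_mulVec, hzy] at this
  exact (mul_pos hε (mul_pos hy' hy')).not_ge this

end PosSemidef

section Polyhedral

variable {n : ℕ}

lemma isPolyhedralSet_setOf_forall_le {ι : Type*} [Finite ι]
    (a : ι → Matrix (Fin n) (Fin n) ℝ) (b : ι → ℝ) :
    IsPolyhedralSet {H | ∀ i, trace ((a i)ᵀ * H) ≤ b i} := by
  obtain ⟨k, ⟨e⟩⟩ := Finite.exists_equiv_fin ι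
  refine ⟨k, a ∘ e.symm, b ∘ e.symm, ?_⟩
  ext H
  exact e.symm.forall_congr_right.symm

lemma isPolyhedralSet_setOf_forall_eq_and_le {ι κ : Type*} [Finite ι] [Finite κ]
    (a : ι → Matrix (Fin n) (Fin n) ℝ) (b : ι → ℝ) (c : κ → Matrix (Fin n) (Fin n) ℝ)
    (d : κ → ℝ) :
    IsPolyhedralSet {H | (∀ i, trace ((a i)ᵀ * H) = b i) ∧ ∀ j, trace ((c j)ᵀ * H) ≤ d j} := by
  convert isPolyhedralSet_setOf_forall_le (Sum.elim a (Sum.elim (-a) c))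
    (Sum.elim b (Sum.elim (-b) d)) using 1
  ext H
  simp only [Set.mem_ofPred_eq, Sum.forall, Sum.elim_inl, Sum.elim_inr, Pi.neg_apply,
    transpose_neg, Matrix.neg_mul, trace_neg, neg_le_neg_iff, le_antisymm_iff, forall_and]
  tauto

lemma isPolyhedralSet_setOf_exists_nonneg_smul (D : Matrix (Fin n) (Fin n) ℝ) :
    IsPolyhedralSet {H | ∃ t : ℝ, 0 ≤ t ∧ H = t • D} := by
  set c := trace (Dᵀ * D) with hc_def
  have hc : 0 ≤ c := by
    simpa using (posSemidef_conjTranspose_mul_self D).trace_nonneg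
  -- `H` is on the ray iff `H p q = D p q / c * ⟪D, H⟫` for all `p q` and `⟪D, H⟫ ≥ 0`;
  -- for `D = 0` this still holds because `x / 0 = 0`.
  convert isPolyhedralSet_setOf_forall_eq_and_le
    (fun pq : Fin n × Fin n => single pq.1 pq.2 1 - (D pq.1 pq.2 / c) • D) 0
    (fun _ : Unit => -D) 0 using 1
  ext H
  simp only [Set.mem_ofPred_eq, transpose_sub, transpose_smul, Matrix.sub_mul, Matrix.smul_mul,
    trace_sub, trace_smul, smul_eq_mul, Pi.zero_apply, sub_eq_zero, transpose_neg,
    Matrix.neg_mul, trace_neg, neg_nonpos, Prod.forall, forall_const, transpose_single,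
    trace_single_mul, one_mul]
  constructor
  · rintro ⟨t, ht, rfl⟩
    simp only [Matrix.mul_smul, trace_smul, smul_eq_mul, Matrix.smul_apply, ← hc_def]
    refine ⟨fun p q => ?_, mul_nonneg ht hc⟩
    rcases hc.eq_or_lt with hc0 | hcpos
    · have hD : D = 0 := by
        simpa [conjTranspose_eq_transpose_of_trivial, c, ← hc0] using
          (trace_conjTranspose_mul_self_eq_zero_iff (A := D))
      simp [hD]
    · field_simp
  · rintro ⟨hH, hDH⟩
    refine ⟨trace (Dᵀ * H) / c, div_nonneg hDH hc, ?_⟩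
    ext p q
    rw [hH p q, Matrix.smul_apply, smul_eq_mul]
    ring

lemma IsPolyhedralSet.exists_eq_setOf_forall_le_zero {C : Set (Matrix (Fin n) (Fin n) ℝ)}
    (hC : IsPolyhedralSet C) (h0 : 0 ∈ C) (hsmul : ∀ H ∈ C, ∀ t : ℝ, 0 ≤ t → t • H ∈ C) :
    ∃ (k : ℕ) (a : Fin k → Matrix (Fin n) (Fin n) ℝ),
      C = {H | ∀ i, trace ((a i)ᵀ * H) ≤ 0} := by
  obtain ⟨k, a, b, rfl⟩ := hC
  have hb : ∀ i, 0 ≤ b i := by simpa using h0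
  refine ⟨k, a, Set.ext fun H => ⟨fun hH i => ?_, fun hH i => (hH i).trans (hb i)⟩⟩
  by_contra! hpos
  have := hsmul H hH ((b i + 1) / trace ((a i)ᵀ * H)) (div_nonneg (by linarith [hb i]) hpos.le) i
  rw [Matrix.mul_smul, trace_smul, smul_eq_mul, div_mul_cancel₀ _ hpos.ne'] at this
  linarith

end Polyhedral

section NormalCone

variable {n : ℕ}

lemma zero_mem_matNormalCone (D : Set (Matrix (Fin n) (Fin n) ℝ)) (x : Matrix (Fin n) (Fin n) ℝ) :
    0 ∈ matNormalCone D x :=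
  ⟨isSymm_zero, fun z _ => by simp⟩

lemma smul_mem_matNormalCone {D : Set (Matrix (Fin n) (Fin n) ℝ)} {x H : Matrix (Fin n) (Fin n) ℝ}
    (hH : H ∈ matNormalCone D x) {t : ℝ} (ht : 0 ≤ t) : t • H ∈ matNormalCone D x :=
  ⟨hH.1.smul t, fun z hz => by
    simpa [transpose_smul, Matrix.smul_mul, trace_smul] using
      mul_nonpos_of_nonneg_of_nonpos ht (hH.2 z hz)⟩

lemma mem_matNormalCone_posSemidef_iff {S H : Matrix (Fin n) (Fin n) ℝ} (hS : S.PosSemidef) :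
    H ∈ matNormalCone {Y | Y.PosSemidef} S ↔ (-H).PosSemidef ∧ trace (H * S) = 0 := by
  constructor
  · rintro ⟨hsymm, hH⟩
    rw [hsymm.eq] at hH
    have h0 := hH 0 .zero
    have h2 := hH (S + S) (hS.add hS)
    simp only [zero_sub, add_sub_cancel_right, Matrix.mul_neg, trace_neg, neg_nonpos] at h0 h2
    refine ⟨.of_dotProduct_mulVec_nonneg (by simpa using hsymm) fun x => ?_, by linarith⟩
    have := hH (S + vecMulVec x x) (hS.add (by simpa using posSemidef_vecMulVec_self_star x))
    simpa [trace_mul_vecMulVec_self, neg_mulVec] using this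
  · rintro ⟨hH, hHS⟩
    have hsymm : H.IsSymm := by simpa using hH.isHermitian
    refine ⟨hsymm, fun Z hZ => ?_⟩
    have := hH.trace_mul_nonneg hZ
    rw [hsymm.eq, Matrix.mul_sub, trace_sub, hHS, sub_zero]
    simpa using this

lemma matNormalCone_posSemidef_eq_ray {S : Matrix (Fin n) (Fin n) ℝ} (hS : S.PosSemidef)
    {v : Fin n → ℝ} (hv : S *ᵥ v = 0) (hker : ∀ x, S *ᵥ x = 0 → ∃ c : ℝ, c • v = x) :
    matNormalCone {Y | Y.PosSemidef} S = {H | ∃ t : ℝ, 0 ≤ t ∧ H = t • -vecMulVec v v} := by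
  ext H
  rw [mem_matNormalCone_posSemidef_iff hS]
  constructor
  · rintro ⟨hH, hHS⟩
    obtain ⟨t, ht, hHt⟩ := hH.exists_eq_smul_vecMulVec hS (by simpa using hHS) hker
    exact ⟨t, ht, by rw [smul_neg, ← hHt, neg_neg]⟩
  · rintro ⟨t, ht, rfl⟩
    refine ⟨by simpa using (posSemidef_vecMulVec_self_star v).smul ht, ?_⟩
    simp [trace_mul_comm _ S, trace_mul_vecMulVec_self, hv]

theorem not_isPolyhedralSet_matNormalCone_posSemidef {S : Matrix (Fin n) (Fin n) ℝ}
    (hS : S.PosSemidef) {u w : Fin n → ℝ} (hu : S *ᵥ u = 0) (hw : S *ᵥ w = 0) (hu0 : u ≠ 0)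
    (hw0 : w ≠ 0) (huw : u ⬝ᵥ w = 0) :
    ¬ IsPolyhedralSet (matNormalCone {Y | Y.PosSemidef} S) := by
  intro hC
  obtain ⟨k, a, hN⟩ := hC.exists_eq_setOf_forall_le_zero (zero_mem_matNormalCone _ _)
    fun H hH t ht => smul_mem_matNormalCone hH ht
  let z : ℝ → Fin n → ℝ := fun t => u + t • w
  let y : ℝ → Fin n → ℝ := fun t => (t * (w ⬝ᵥ w)) • u + (-(u ⬝ᵥ u)) • w
  have hzy : ∀ t, z t ⬝ᵥ y t = 0 := fun t => by
    simp only [z, y, add_dotProduct, dotProduct_add, smul_dotProduct, dotProduct_smul,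
      dotProduct_comm w u, huw, smul_eq_mul]
    ring
  have hy : ∀ t, y t ≠ 0 := fun t hyt => by
    have := congrArg (· ⬝ᵥ w) hyt
    simp [y, huw, dotProduct_self_eq_zero, hu0, hw0] at this
  -- `-z zᵀ ∈ N` but `-z zᵀ + ε y yᵀ ∉ N` for every `ε > 0`, so some constraint is active at
  -- `-z zᵀ` and increases along `y yᵀ`.
  have hactive : ∀ t, ∃ i, z t ⬝ᵥ (a i)ᵀ *ᵥ z t = 0 ∧ 0 < y t ⬝ᵥ (a i)ᵀ *ᵥ y t := by
    intro t
    have hmem : -vecMulVec (z t) (z t) ∈ matNormalCone {Y | Y.PosSemidef} S := by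
      rw [mem_matNormalCone_posSemidef_iff hS]
      refine ⟨by simpa using posSemidef_vecMulVec_self_star (z t), ?_⟩
      simp [trace_mul_comm _ S, trace_mul_vecMulVec_self, z, mulVec_add, mulVec_smul, hu, hw]
    have hout : ∀ ε : ℝ, 0 < ε → -vecMulVec (z t) (z t) + ε • vecMulVec (y t) (y t) ∉
        matNormalCone {Y | Y.PosSemidef} S := fun ε hε hmem' => by
      rw [mem_matNormalCone_posSemidef_iff hS] at hmem'
      have hpsd := hmem'.1
      rw [neg_add, neg_neg, ← sub_eq_add_neg] at hpsd
      exact not_posSemidef_vecMulVec_sub_smul (hzy t) (hy t) hε hpsd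
    rw [hN] at hmem hout
    obtain ⟨i, hi⟩ := exists_eq_zero_and_pos_of_forall_exists_pos hmem fun ε hε => by
      simpa [Matrix.mul_add] using hout ε hε
    exact ⟨i, by simpa [trace_mul_vecMulVec_self] using hi⟩
  choose f hf using hactive
  obtain ⟨i, hi⟩ := Finite.exists_infinite_fiber f
  have hfib : (f ⁻¹' {i}).Infinite := Set.infinite_coe_iff.mp hi
  obtain ⟨t, ht⟩ := hfib.nonempty
  have hvanish := dotProduct_mulVec_smul_add_smul_eq_zero (A := (a i)ᵀ) (u := u) (w := w)
    (hfib.mono fun s hs => by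
      have := (hf s).1
      rwa [show f s = i from hs] at this)
  have := (hf t).2
  rw [show f t = i from ht, hvanish] at this
  exact this.false

end NormalCone

theorem stmt4_general {n : ℕ} (S : Matrix (Fin n) (Fin n) ℝ) (hS : S.PosSemidef) :
    IsPolyhedralSet (matNormalCone {Y : Matrix (Fin n) (Fin n) ℝ | Y.PosSemidef} S) ↔
      n - 1 ≤ S.rank := by
  have hdim : S.rank + finrank ℝ (LinearMap.ker S.mulVecLin) = n := by
    simpa [Matrix.rank] using S.mulVecLin.finrank_range_add_finrank_ker
  constructor
  · intro hC
    by_contra! hrank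
    obtain ⟨u, hu, w, hw, hu0, hw0, huw⟩ :=
      (LinearMap.ker S.mulVecLin).exists_dotProduct_eq_zero_of_one_lt_finrank (by omega)
    exact not_isPolyhedralSet_matNormalCone_posSemidef hS hu hw hu0 hw0 huw hC
  · intro hrank
    obtain ⟨⟨v, hv⟩, hspan⟩ :=
      finrank_le_one_iff.mp (show finrank ℝ (LinearMap.ker S.mulVecLin) ≤ 1 by omega)
    rw [matNormalCone_posSemidef_eq_ray hS hv fun x hx => ?_]
    · exact isPolyhedralSet_setOf_exists_nonneg_smul _
    · obtain ⟨c, hc⟩ := hspan ⟨x, hx⟩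
      exact ⟨c, congrArg Subtype.val hc⟩

theorem stmt4 {n : ℕ} (X S : Matrix (Fin n) (Fin n) ℝ)
    (hX : X.PosSemidef) (hS : S.PosSemidef)
    (hXS : Matrix.trace (Xᵀ * S) = 0) :
    IsPolyhedralSet (matNormalCone {Y : Matrix (Fin n) (Fin n) ℝ | Y.PosSemidef} S) ↔
      n - 1 ≤ S.rank :=
  stmt4_general S hS
end

section
/- Let $\overline{X}, \overline{S} \in \mathbb{S}^n_+$ with $\langle \overline{X}, \overline{S}\rangle = 0$. Then $0 \in \overline{X} + \mathrm{ri}(\mathcal{N}_{\mathbb{S}^n_+}(\overline{S}))$, i.e., $-\overline{X}$ lies in the relative interior of the normal cone of $\mathbb{S}^n_+$ at $\overline{S}$, if and only if $\mathrm{rank}(\overline{X}) + \mathrm{rank}(\overline{S}) = n$. -/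
open Matrix

/-!
The normal cone of `𝕊ⁿ₊` at `S` is `N = {H ∈ 𝕊ⁿ : -H ⪰ 0, H S = 0}`, and its affine hull lies in
`{H ∈ 𝕊ⁿ : H S = 0}`. As `X S = 0` and `ℝⁿ = ker S ⊕ range S`, the common kernel of `X` and `S`
has dimension `n - rank X - rank S`. If it contains `v ≠ 0`, then `v vᵀ` is a direction of the
affine hull along which `-X` leaves `N` at once. Otherwise `X` is positive definite on `ker S`,
an open condition; and a symmetric `H` with `H S = 0` that is negative definite on `ker S` lies
in `N`, because `H` vanishes on `range S`.
-/

open Topology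

namespace Matrix

variable {ι : Type*} [Fintype ι]

open scoped ComplexOrder MatrixOrder

theorem PosSemidef.trace_mul_nonneg_s5 [DecidableEq ι] {A B : Matrix ι ι ℝ} (hA : A.PosSemidef)
    (hB : B.PosSemidef) : 0 ≤ (A * B).trace := by
  obtain ⟨C, rfl⟩ := CStarAlgebra.nonneg_iff_eq_star_mul_self.mp hA.nonneg
  rw [Matrix.mul_assoc, trace_mul_comm]
  exact (hB.mul_mul_conjTranspose_same C).trace_nonneg

theorem PosSemidef.mul_eq_zero_of_trace_mul_eq_zero [DecidableEq ι] {𝕜 : Type*} [RCLike 𝕜]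
    {A B : Matrix ι ι 𝕜} (hA : A.PosSemidef) (hB : B.PosSemidef) (h : (A * B).trace = 0) :
    A * B = 0 := by
  set C := CFC.sqrt A
  set D := CFC.sqrt B
  have hCC : C * C = A := CFC.sqrt_mul_sqrt_self A hA.nonneg
  have hDD : D * D = B := CFC.sqrt_mul_sqrt_self B hB.nonneg
  have hC : Cᴴ = C := IsSelfAdjoint.of_nonneg (CFC.sqrt_nonneg A)
  have hD : Dᴴ = D := IsSelfAdjoint.of_nonneg (CFC.sqrt_nonneg B)
  -- `‖C D‖_F² = tr (D C C D) = tr (A B)`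
  have hCD : C * D = 0 := by
    rw [← trace_conjTranspose_mul_self_eq_zero_iff, conjTranspose_mul, hC, hD,
      Matrix.mul_assoc, trace_mul_comm, ← h, ← hCC, ← hDD]
    simp only [Matrix.mul_assoc]
  calc A * B = C * (C * D) * D := by simp only [← hCC, ← hDD, Matrix.mul_assoc]
    _ = 0 := by rw [hCD, Matrix.mul_zero, Matrix.zero_mul]

theorem trace_mul_vecMulVec_self_s5 {R : Type*} [CommSemiring R] (H : Matrix ι ι R) (v : ι → R) :
    (H * vecMulVec v v).trace = v ⬝ᵥ H *ᵥ v := by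
  rw [mul_vecMulVec, trace_vecMulVec, dotProduct_comm]

theorem isCompl_ker_range_of_isSymm {S : Matrix ι ι ℝ} (hS : S.IsSymm) :
    IsCompl (LinearMap.ker S.mulVecLin) (LinearMap.range S.mulVecLin) := by
  rw [Submodule.isCompl_iff_disjoint _ _
    (by rw [add_comm, LinearMap.finrank_range_add_finrank_ker]), Submodule.disjoint_def]
  rintro _ hker ⟨w, rfl⟩
  have hker : S *ᵥ (S *ᵥ w) = 0 := hker
  have : (S *ᵥ w) ⬝ᵥ (S *ᵥ w) = 0 := by
    rw [dotProduct_mulVec, ← mulVec_transpose, hS.eq, hker, zero_dotProduct]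
  exact dotProduct_self_eq_zero.mp this

theorem finrank_ker_inf_ker_add_rank_add_rank {X S : Matrix ι ι ℝ} (hS : S.IsSymm)
    (hXS : X * S = 0) :
    Module.finrank ℝ ↥(LinearMap.ker X.mulVecLin ⊓ LinearMap.ker S.mulVecLin) + X.rank + S.rank =
      Fintype.card ι := by
  have hrange : LinearMap.range S.mulVecLin ≤ LinearMap.ker X.mulVecLin := by
    rintro _ ⟨w, rfl⟩
    simp [mulVec_mulVec, hXS]
  have hsup : LinearMap.ker X.mulVecLin ⊔ LinearMap.ker S.mulVecLin = ⊤ :=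
    eq_top_mono (sup_le le_sup_right (hrange.trans le_sup_left))
      (isCompl_ker_range_of_isSymm hS).sup_eq_top
  have := Submodule.finrank_sup_add_finrank_inf_eq (LinearMap.ker X.mulVecLin)
    (LinearMap.ker S.mulVecLin)
  have hX := LinearMap.finrank_range_add_finrank_ker X.mulVecLin
  have hS' := LinearMap.finrank_range_add_finrank_ker S.mulVecLin
  rw [hsup, finrank_top] at this
  simp only [Module.finrank_fintype_fun_eq_card] at this hX hS'
  rw [rank, rank]
  omega

theorem posSemidef_of_mul_eq_zero_of_nonneg_on_ker {A S : Matrix ι ι ℝ} (hS : S.IsSymm)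
    (hA : A.IsSymm) (hAS : A * S = 0) (hker : ∀ v ∈ LinearMap.ker S.mulVecLin, 0 ≤ v ⬝ᵥ A *ᵥ v) :
    A.PosSemidef := by
  refine .of_dotProduct_mulVec_nonneg (isHermitian_iff_isSymm.mpr hA) fun w ↦ ?_
  obtain ⟨k, hk, _, ⟨x, rfl⟩, rfl⟩ :=
    Submodule.mem_sup.mp <|
      (isCompl_ker_range_of_isSymm hS).sup_eq_top ▸ Submodule.mem_top (x := w)
  have hASx : A *ᵥ (S *ᵥ x) = 0 := by rw [mulVec_mulVec, hAS, zero_mulVec]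
  have hcross : (S *ᵥ x) ⬝ᵥ A *ᵥ k = 0 := by
    rw [dotProduct_mulVec, ← mulVec_transpose, hA.eq, hASx, zero_dotProduct]
  simpa [mulVecLin_apply, mulVec_add, hASx, add_dotProduct, hcross] using hker k hk

def symmAnnihilator {R : Type*} [CommRing R] (S : Matrix ι ι R) :
    Submodule R (Matrix ι ι R) where
  carrier := {H | H.IsSymm ∧ H * S = 0}
  add_mem' := fun ⟨ha, haS⟩ ⟨hb, hbS⟩ ↦ ⟨ha.add hb, by rw [Matrix.add_mul, haS, hbS, add_zero]⟩
  zero_mem' := ⟨isSymm_zero, Matrix.zero_mul S⟩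
  smul_mem' := fun c _ ⟨h, hS⟩ ↦ ⟨h.smul c, by rw [smul_mul, hS, smul_zero]⟩

theorem isOpen_setOf_forall_dotProduct_mulVec_pos (W : Submodule ℝ (ι → ℝ)) :
    IsOpen {A : Matrix ι ι ℝ | ∀ v ∈ W, v ≠ 0 → 0 < v ⬝ᵥ A *ᵥ v} := by
  have hK : IsCompact ((W : Set (ι → ℝ)) ∩ Metric.sphere 0 1) :=
    (isCompact_sphere 0 1).inter_left W.closed_of_finiteDimensional
  have hunit : {A : Matrix ι ι ℝ | ∀ v ∈ W, v ≠ 0 → 0 < v ⬝ᵥ A *ᵥ v} =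
      {A | ∀ v ∈ (W : Set (ι → ℝ)) ∩ Metric.sphere 0 1, 0 < v ⬝ᵥ A *ᵥ v} := by
    ext A
    refine ⟨fun h v ⟨hv, hv1⟩ ↦ h v hv (ne_zero_of_mem_unit_sphere ⟨v, hv1⟩), fun h v hv hv0 ↦ ?_⟩
    have := h (‖v‖⁻¹ • v) ⟨W.smul_mem _ hv, by simp [norm_smul, hv0]⟩
    rw [mulVec_smul, dotProduct_smul, smul_dotProduct, smul_eq_mul, smul_eq_mul] at this
    exact pos_of_mul_pos_right (pos_of_mul_pos_right this (by positivity)) (by positivity)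
  have hq : Continuous fun p : Matrix ι ι ℝ × (ι → ℝ) ↦ p.2 ⬝ᵥ p.1 *ᵥ p.2 :=
    continuous_snd.dotProduct (continuous_fst.matrix_mulVec continuous_snd)
  rw [hunit, isOpen_iff_mem_nhds]
  exact fun A hA ↦ hK.eventually_forall_of_forall_eventually fun v hv ↦
    (hq.tendsto (A, v)).eventually (lt_mem_nhds (hA v hv))

end Matrix

section IntrinsicInterior

variable {𝕜 V P : Type*} [Ring 𝕜] [AddCommGroup V] [Module 𝕜 V] [TopologicalSpace P]
  [AddTorsor V P]

theorem mem_intrinsicInterior_of_isOpen {s O : Set P} {A : AffineSubspace 𝕜 P} {x : P}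
    (hO : IsOpen O) (hxs : x ∈ s) (hxO : x ∈ O) (hsA : s ⊆ A) (hOs : O ∩ A ⊆ s) :
    x ∈ intrinsicInterior 𝕜 s :=
  mem_intrinsicInterior.mpr ⟨⟨x, subset_affineSpan 𝕜 s hxs⟩,
    interior_maximal (fun (y : affineSpan 𝕜 s) hy ↦ hOs ⟨hy, affineSpan_le.mpr hsA y.2⟩)
      (hO.preimage continuous_subtype_val) hxO, rfl⟩

end IntrinsicInterior

theorem eventually_add_smul_mem_of_mem_intrinsicInterior {𝕜 E : Type*} [Ring 𝕜]
    [TopologicalSpace 𝕜] [AddCommGroup E] [Module 𝕜 E] [TopologicalSpace E] [ContinuousAdd E]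
    [ContinuousSMul 𝕜 E] {s : Set E} {x v : E} (hx : x ∈ intrinsicInterior 𝕜 s)
    (hv : v ∈ (affineSpan 𝕜 s).direction) : ∀ᶠ t in 𝓝 (0 : 𝕜), x + t • v ∈ s := by
  obtain ⟨y, hy, rfl⟩ := mem_intrinsicInterior.mp hx
  let γ : 𝕜 → affineSpan 𝕜 s := fun t ↦ ⟨y + t • v, by
    simpa [vadd_eq_add, add_comm] using
      AffineSubspace.vadd_mem_of_mem_direction (Submodule.smul_mem _ t hv) y.2⟩
  have hγ : Continuous γ :=
    (continuous_const.add (continuous_id.smul continuous_const)).subtype_mk _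
  have hγ0 : γ 0 = y := Subtype.ext (by simp [γ])
  exact (hγ.continuousAt.eventually_mem (hγ0 ▸ isOpen_interior.mem_nhds hy)).mono
    fun t ht ↦ interior_subset (s := Subtype.val ⁻¹' s) ht

variable {ι : Type*} [Fintype ι]

theorem rank_add_rank_eq_of_neg_mem_intrinsicInterior {X S : Matrix ι ι ℝ} (hS : S.PosSemidef)
    (hXS : X * S = 0)
    (h : -X ∈ intrinsicInterior ℝ {H : Matrix ι ι ℝ | H.IsSymm ∧ (-H).PosSemidef ∧ H * S = 0}) :
    X.rank + S.rank = Fintype.card ι := by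
  by_contra hne
  have hSsymm := isHermitian_iff_isSymm.mp hS.1
  have hdim := finrank_ker_inf_ker_add_rank_add_rank hSsymm hXS
  obtain ⟨v, ⟨hXv, hSv⟩, hv0⟩ := Submodule.exists_mem_ne_zero_of_ne_bot
    (p := LinearMap.ker X.mulVecLin ⊓ LinearMap.ker S.mulVecLin)
    fun hbot ↦ hne (by rw [hbot, finrank_bot] at hdim; omega)
  replace hXv : X *ᵥ v = 0 := hXv
  replace hSv : S *ᵥ v = 0 := hSv
  set N := {H : Matrix ι ι ℝ | H.IsSymm ∧ (-H).PosSemidef ∧ H * S = 0}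
  have hM : -vecMulVec v v ∈ N := by
    refine ⟨?_, by simpa using posSemidef_vecMulVec_self_star v, ?_⟩
    · exact (isHermitian_iff_isSymm.mp (posSemidef_vecMulVec_self_star v).1).neg
    · rw [Matrix.neg_mul, vecMulVec_mul, ← mulVec_transpose, hSsymm.eq, hSv, vecMulVec_zero,
        neg_zero]
  have h0 : (0 : Matrix ι ι ℝ) ∈ N := ⟨isSymm_zero, by simpa using .zero, Matrix.zero_mul S⟩
  have hdir : vecMulVec v v ∈ (affineSpan ℝ N).direction := by
    simpa using AffineSubspace.vsub_mem_direction (subset_affineSpan ℝ N h0)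
      (subset_affineSpan ℝ N hM)
  obtain ⟨t, ⟨-, hpsd, -⟩, ht⟩ :=
    ((eventually_add_smul_mem_of_mem_intrinsicInterior h hdir).filter_mono nhdsWithin_le_nhds
      |>.and self_mem_nhdsWithin).exists (f := 𝓝[>] (0 : ℝ))
  have hquad : v ⬝ᵥ (-(-X + t • vecMulVec v v)) *ᵥ v = -(t * (v ⬝ᵥ v) ^ 2) := by
    rw [neg_add, neg_neg, add_mulVec, neg_mulVec, hXv, smul_mulVec, dotProduct_add,
      dotProduct_neg, dotProduct_smul, dotProduct_mulVec, vecMul_vecMulVec, dotProduct_zero,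
      smul_dotProduct]
    simp [sq]
  have hvv : 0 < v ⬝ᵥ v := by simpa using dotProduct_star_self_pos_iff.mpr hv0
  have := hpsd.dotProduct_mulVec_nonneg v
  rw [star_trivial, hquad] at this
  exact (neg_neg_of_pos (by positivity)).not_ge this

theorem neg_mem_intrinsicInterior_of_rank_add_rank_eq {X S : Matrix ι ι ℝ} (hX : X.PosSemidef)
    (hS : S.PosSemidef) (hXS : X * S = 0) (hrank : X.rank + S.rank = Fintype.card ι) :
    -X ∈ intrinsicInterior ℝ {H : Matrix ι ι ℝ | H.IsSymm ∧ (-H).PosSemidef ∧ H * S = 0} := by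
  have hSsymm := isHermitian_iff_isSymm.mp hS.1
  have hbot : LinearMap.ker X.mulVecLin ⊓ LinearMap.ker S.mulVecLin = ⊥ := by
    have := finrank_ker_inf_ker_add_rank_add_rank hSsymm hXS
    exact Submodule.finrank_eq_zero.mp (by omega)
  have hXpos : ∀ v ∈ LinearMap.ker S.mulVecLin, v ≠ 0 → 0 < v ⬝ᵥ X *ᵥ v := by
    refine fun v hv hv0 ↦ lt_of_le_of_ne (by simpa using hX.dotProduct_mulVec_nonneg v)
      fun hzero ↦ hv0 ((Submodule.mem_bot ℝ).mp (hbot ▸ ⟨?_, hv⟩))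
    exact (hX.dotProduct_mulVec_zero_iff v).mp (by simpa using hzero.symm)
  refine mem_intrinsicInterior_of_isOpen
    ((isOpen_setOf_forall_dotProduct_mulVec_pos (LinearMap.ker S.mulVecLin)).preimage
      continuous_neg)
    ⟨(isHermitian_iff_isSymm.mp hX.1).neg, by simpa using hX, by simp [hXS]⟩
    (by simpa using hXpos)
    (A := (symmAnnihilator S).toAffineSubspace) (fun H hH ↦ ⟨hH.1, hH.2.2⟩) ?_
  rintro H ⟨hHO, hH, hHS⟩
  refine ⟨hH, posSemidef_of_mul_eq_zero_of_nonneg_on_ker hSsymm hH.neg (by simp [hHS])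
    fun v hv ↦ ?_, hHS⟩
  rcases eq_or_ne v 0 with rfl | hv0
  · simp
  · exact (hHO v hv hv0).le

theorem matNormalCone_posSemidef {n : ℕ} {S : Matrix (Fin n) (Fin n) ℝ} (hS : S.PosSemidef) :
    matNormalCone {Y | Y.PosSemidef} S = {H | H.IsSymm ∧ (-H).PosSemidef ∧ H * S = 0} := by
  ext H
  simp only [matNormalCone, Set.mem_ofPred_eq]
  refine ⟨fun ⟨hH, hle⟩ ↦ ?_, fun ⟨hH, hneg, hHS⟩ ↦ ⟨hH, fun Z hZ ↦ ?_⟩⟩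
  · rw [hH.eq] at hle
    have hneg : (-H).PosSemidef := by
      refine .of_dotProduct_mulVec_nonneg (isHermitian_iff_isSymm.mpr hH.neg) fun v ↦ ?_
      have := hle _ (hS.add (posSemidef_vecMulVec_self_star v))
      simpa [trace_mul_vecMulVec_self_s5, neg_mulVec] using this
    have h0 : 0 ≤ (H * S).trace := by simpa using hle 0 .zero
    have h1 := hneg.trace_mul_nonneg_s5 hS
    refine ⟨hH, hneg, neg_eq_zero.mp ?_⟩
    rw [← Matrix.neg_mul]
    exact hneg.mul_eq_zero_of_trace_mul_eq_zero hS (by simp at h1 ⊢; linarith)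
  · rw [hH.eq, Matrix.mul_sub, hHS, sub_zero]
    simpa using hneg.trace_mul_nonneg_s5 hZ

theorem stmt5 {n : ℕ} (X S : Matrix (Fin n) (Fin n) ℝ)
    (hX : X.PosSemidef) (hS : S.PosSemidef)
    (hXS : Matrix.trace (Xᵀ * S) = 0) :
    -X ∈ intrinsicInterior ℝ
        (matNormalCone {Y : Matrix (Fin n) (Fin n) ℝ | Y.PosSemidef} S) ↔
      X.rank + S.rank = n := by
  have hXS0 : X * S = 0 :=
    hX.mul_eq_zero_of_trace_mul_eq_zero hS (by rwa [(isHermitian_iff_isSymm.mp hX.1).eq] at hXS)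
  rw [matNormalCone_posSemidef hS]
  constructor
  · simpa using rank_add_rank_eq_of_neg_mem_intrinsicInterior hS hXS0
  · intro h
    exact neg_mem_intrinsicInterior_of_rank_add_rank_eq hX hS hXS0 (by simpa using h)
end

section
/- Let $\mathcal{A} : \mathbb{S}^n \to \mathbb{R}^m$ be a linear map and $b \in \mathbb{R}^m$. Suppose there exists $\widehat{X} \succ 0$ with $\mathcal{A}\widehat{X} = b$, and let $\mathcal{X} = \{X \in \mathbb{S}^n_+ \mid \mathcal{A}X = b\}$. Then for any $X \in \mathbb{S}^n_+$, $\mathrm{dist}(X, \mathcal{X}) \le \sigma_{\min}^{-1}(\mathcal{A})\big(1 + \lambda_{\min}^{-1}(\widehat{X})\|X - \widehat{X}\|\big)\|b - \mathcal{A}X\|$, where $\sigma_{\min}(\mathcal{A})$ is the smallest positive singular value of $\mathcal{A}$ and $\lambda_{\min}(\widehat{X})$ is the smallest eigenvalue of $\widehat{X}$. -/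
/-! The residual `u := b - A X = A (Xhat - X)` has a symmetric preimage `W` with
`‖W‖ ≤ σ⁻¹ ‖u‖`, so `X + W` satisfies the linear constraint but may be indefinite.
The mixture `Y := (1 - t) (X + W) + t Xhat` with `t := ‖W‖ / (‖W‖ + μ)` still satisfies it, and
it is positive semidefinite: the only indefinite term `(1 - t) W` has Frobenius norm
`(1 - t) ‖W‖ = t μ`, which the margin `t μ I ⪯ t Xhat` absorbs, since a symmetric matrix of
Frobenius norm at most `c` is `⪰ -c I`. Finally
`‖Y - X‖ ≤ (1 - t) ‖W‖ + t ‖X - Xhat‖ = ‖W‖ (μ + ‖X - Xhat‖) / (‖W‖ + μ) ≤ ‖W‖ (1 + μ⁻¹ ‖X - Xhat‖)`. -/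

open Matrix

attribute [local instance] Matrix.frobeniusNormedAddCommGroup

/-- `σ` acts as (a lower bound by) the smallest positive singular value of the linear map
`A` restricted to symmetric matrices: every vector in the range of `A` (over symmetric
matrices) has a symmetric preimage of norm at most `σ⁻¹` times its norm. -/
def IsMinSingularBound {n m : ℕ} (A : Matrix (Fin n) (Fin n) ℝ →ₗ[ℝ] EuclideanSpace ℝ (Fin m))
    (σ : ℝ) : Prop :=
  0 < σ ∧ ∀ u : EuclideanSpace ℝ (Fin m), (∃ Y : Matrix (Fin n) (Fin n) ℝ, Yᵀ = Y ∧ A Y = u) →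
    ∃ W : Matrix (Fin n) (Fin n) ℝ, Wᵀ = W ∧ A W = u ∧ ‖W‖ ≤ σ⁻¹ * ‖u‖

attribute [local instance] Matrix.frobeniusNormedSpace

namespace Matrix

variable {m n : Type*} [Fintype m] [Fintype n]

theorem frobenius_norm_mulVec_le {𝕜 : Type*} [RCLike 𝕜] (S : Matrix m n 𝕜) (x : n → 𝕜) :
    ‖WithLp.toLp 2 (S *ᵥ x)‖ ≤ ‖S‖ * ‖WithLp.toLp 2 x‖ := by
  simpa only [← frobenius_norm_replicateCol (ι := Unit), replicateCol_mulVec] using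
    frobenius_norm_mul S (replicateCol Unit x)

theorem abs_dotProduct_mulVec_le_frobenius_norm (S : Matrix n n ℝ) (x : n → ℝ) :
    |x ⬝ᵥ (S *ᵥ x)| ≤ ‖S‖ * ‖WithLp.toLp 2 x‖ ^ 2 := by
  calc |x ⬝ᵥ (S *ᵥ x)| = |inner ℝ (WithLp.toLp 2 x) (WithLp.toLp 2 (S *ᵥ x))| := by
        rw [EuclideanSpace.inner_eq_star_dotProduct, star_trivial, dotProduct_comm]
    _ ≤ ‖WithLp.toLp 2 x‖ * ‖WithLp.toLp 2 (S *ᵥ x)‖ := abs_real_inner_le_norm _ _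
    _ ≤ ‖WithLp.toLp 2 x‖ * (‖S‖ * ‖WithLp.toLp 2 x‖) := by
        gcongr; exact frobenius_norm_mulVec_le S x
    _ = ‖S‖ * ‖WithLp.toLp 2 x‖ ^ 2 := by ring

theorem posSemidef_smul_one_add_of_frobenius_norm_le [DecidableEq n] {S : Matrix n n ℝ}
    (hS : S.IsHermitian) {c : ℝ} (hc : ‖S‖ ≤ c) : (c • (1 : Matrix n n ℝ) + S).PosSemidef := by
  refine .of_dotProduct_mulVec_nonneg ((isHermitian_one.smul (IsSelfAdjoint.all c)).add hS)
    fun x => ?_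
  have hx : x ⬝ᵥ x = ‖WithLp.toLp 2 x‖ ^ 2 := by
    rw [← real_inner_self_eq_norm_sq, EuclideanSpace.inner_eq_star_dotProduct, star_trivial]
  rw [star_trivial, add_mulVec, dotProduct_add, smul_mulVec, one_mulVec, dotProduct_smul,
    smul_eq_mul, hx]
  linarith [neg_abs_le (x ⬝ᵥ (S *ᵥ x)), abs_dotProduct_mulVec_le_frobenius_norm S x,
    mul_le_mul_of_nonneg_right hc (sq_nonneg ‖WithLp.toLp 2 x‖)]

theorem posSemidef_one_sub_smul_add_smul [DecidableEq n] {X W Z : Matrix n n ℝ} {μ t : ℝ}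
    (hX : X.PosSemidef) (hW : W.IsHermitian) (hZ : (Z - μ • (1 : Matrix n n ℝ)).PosSemidef)
    (ht₀ : 0 ≤ t) (ht₁ : t ≤ 1) (htW : (1 - t) * ‖W‖ ≤ t * μ) :
    ((1 - t) • (X + W) + t • Z).PosSemidef := by
  have hWt : ‖(1 - t) • W‖ ≤ t * μ := by
    rwa [norm_smul, Real.norm_of_nonneg (by linarith)]
  have hsplit : (1 - t) • (X + W) + t • Z =
      (1 - t) • X + t • (Z - μ • 1) + ((t * μ) • 1 + (1 - t) • W) := by
    module
  rw [hsplit]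
  exact ((hX.smul (by linarith)).add (hZ.smul ht₀)).add
    (posSemidef_smul_one_add_of_frobenius_norm_le (hW.smul (IsSelfAdjoint.all _)) hWt)

end Matrix

theorem norm_one_sub_smul_add_add_smul_sub_le {E : Type*} [SeminormedAddCommGroup E]
    [NormedSpace ℝ E] (x w z : E) {t : ℝ} (ht₀ : 0 ≤ t) (ht₁ : t ≤ 1) :
    ‖(1 - t) • (x + w) + t • z - x‖ ≤ (1 - t) * ‖w‖ + t * ‖x - z‖ := by
  calc ‖(1 - t) • (x + w) + t • z - x‖ = ‖(1 - t) • w + t • (z - x)‖ := by congr 1; module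
    _ ≤ ‖(1 - t) • w‖ + ‖t • (z - x)‖ := norm_add_le _ _
    _ = (1 - t) * ‖w‖ + t * ‖x - z‖ := by
      rw [norm_smul, norm_smul, Real.norm_of_nonneg (by linarith), Real.norm_of_nonneg ht₀,
        norm_sub_rev]

theorem stmt10_general {n m : ℕ} (A : Matrix (Fin n) (Fin n) ℝ →ₗ[ℝ] EuclideanSpace ℝ (Fin m))
    (b : EuclideanSpace ℝ (Fin m))
    (Xhat : Matrix (Fin n) (Fin n) ℝ) (hAXhat : A Xhat = b)
    (σ : ℝ) (hσ : IsMinSingularBound A σ)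
    (μ : ℝ) (hμ : 0 < μ) (hμmin : (Xhat - μ • (1 : Matrix (Fin n) (Fin n) ℝ)).PosSemidef)
    (X : Matrix (Fin n) (Fin n) ℝ) (hX : X.PosSemidef) :
    Metric.infDist X {Y : Matrix (Fin n) (Fin n) ℝ | Y.PosSemidef ∧ A Y = b} ≤
      σ⁻¹ * (1 + μ⁻¹ * ‖X - Xhat‖) * ‖b - A X‖ := by
  have hXhat : Xhat.IsHermitian := by
    simpa using hμmin.isHermitian.add (isHermitian_one.smul (IsSelfAdjoint.all μ))
  obtain ⟨W, hW, hAW, hWb⟩ := hσ.2 (b - A X)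
    ⟨Xhat - X, (hXhat.sub hX.isHermitian).eq, by rw [map_sub, hAXhat]⟩
  set w := ‖W‖
  have hw : 0 ≤ w := norm_nonneg W
  set d := ‖X - Xhat‖
  have hwμ : 0 < w + μ := by positivity
  set t := w / (w + μ) with ht
  have ht₀ : 0 ≤ t := by positivity
  have ht₁ : t ≤ 1 := (div_le_one hwμ).2 (by linarith)
  have htw : (1 - t) * w = t * μ := by rw [ht]; field_simp; ring
  have hY : (1 - t) • (X + W) + t • Xhat ∈
      {Y : Matrix (Fin n) (Fin n) ℝ | Y.PosSemidef ∧ A Y = b} :=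
    ⟨posSemidef_one_sub_smul_add_smul hX hW hμmin ht₀ ht₁ htw.le, by
      rw [map_add, map_smul, map_smul, map_add, hAW, hAXhat]; module⟩
  calc Metric.infDist X _ ≤ ‖(1 - t) • (X + W) + t • Xhat - X‖ := by
        rw [← dist_eq_norm, dist_comm]; exact Metric.infDist_le_dist_of_mem hY
    _ ≤ (1 - t) * w + t * d := norm_one_sub_smul_add_add_smul_sub_le X W Xhat ht₀ ht₁
    _ = w * (μ + d) / (w + μ) := by rw [ht]; field_simp; ring
    _ ≤ w * (μ + d) / μ := by gcongr; linarith
    _ = (1 + μ⁻¹ * d) * w := by field_simp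
    _ ≤ σ⁻¹ * (1 + μ⁻¹ * d) * ‖b - A X‖ := by rw [mul_assoc, mul_left_comm]; gcongr

theorem stmt10 {n m : ℕ} (A : Matrix (Fin n) (Fin n) ℝ →ₗ[ℝ] EuclideanSpace ℝ (Fin m))
    (b : EuclideanSpace ℝ (Fin m))
    (Xhat : Matrix (Fin n) (Fin n) ℝ) (hXhat : Xhat.PosDef) (hAXhat : A Xhat = b)
    (σ : ℝ) (hσ : IsMinSingularBound A σ)
    (μ : ℝ) (hμ : 0 < μ) (hμmin : (Xhat - μ • (1 : Matrix (Fin n) (Fin n) ℝ)).PosSemidef)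
    (X : Matrix (Fin n) (Fin n) ℝ) (hX : X.PosSemidef) :
    Metric.infDist X {Y : Matrix (Fin n) (Fin n) ℝ | Y.PosSemidef ∧ A Y = b} ≤
      σ⁻¹ * (1 + μ⁻¹ * ‖X - Xhat‖) * ‖b - A X‖ :=
  stmt10_general A b Xhat hAXhat σ hσ μ hμ hμmin X hX
end
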